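/- (A posteriori error estimate, steady case.) Let A₁ ∈ ℝ^{N₁×N₁} and A₂ ∈ ℝ^{N₂×N₂} be invertible with constants σ₁, σ₂ > 0 satisfying σ₁‖x‖₂ ≤ ‖A₁x‖₂ for all x ∈ ℝ^{N₁} and σ₂‖y‖₂ ≤ ‖A₂y‖₂ for all y ∈ ℝ^{N₂}. Let 0 < M < N₂, let Φ ∈ ℝ^{N₂×M} have orthonormal columns, let P ∈ ℝ^{N₂×M} be a selection matrix (columns distinct standard basis vectors of ℝ^{N₂}) with PᵀΦ invertible, and let U ∈ ℝ^{M×N₁}. Suppose: (i) u₁ ∈ ℝ^{N₁} satisfies A₁ u₁ = f₁; (ii) u_D ∈ ℝ^{N₂} satisfies U u₁ = Pᵀ u_D; (iii) ũ₂ ∈ ℝ^{N₂} satisfies A₂ ũ₂ = f₂ − A₂ u_D, and u₂ := ũ₂ + u_D. Let V₁ ∈ ℝ^{N₁×n₁}, V₂ ∈ ℝ^{N₂×n₂}, let u_{n₁} ∈ ℝ^{n₁} and ũ_{n₂} ∈ ℝ^{n₂} be arbitrary reduced vectors, define the residuals r₁ := f₁ − A₁ V₁ u_{n₁} and r₂ :=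 (f₂ − A₂ u_D) − A₂ V₂ ũ_{n₂}, define the reduced slave approximation w₂ := V₂ ũ_{n₂} + Φ (PᵀΦ)⁻¹ U V₁ u_{n₁}, and set C := ‖Φ (PᵀΦ)⁻¹ U‖₂. Then ‖u₂ − w₂‖₂ ≤ (1/σ₂)‖r₂‖₂ + ‖(PᵀΦ)⁻¹‖₂ · ‖u_D − Φ Φᵀ u_D‖₂ + (C/σ₁)‖r₁‖₂. -/

import Mathlib

/-!
The error splits as `u₂ - w₂ = e₂ + (u_D - 𝒫 u_D) + Φ(PᵀΦ)⁻¹U e₁` with `𝒫 = Φ(PᵀΦ)⁻¹Pᵀ` the DEIM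
projector and `eᵢ` the ROM errors; the lower bounds `σᵢ‖x‖ ≤ ‖Aᵢx‖` turn `eᵢ` into residuals.
For the DEIM term, `x = f - 𝒫f` vanishes at the magic points (`Pᵀx = 0`). With `z = Φᵀx`,
Cauchy–Schwarz against the part of `Φz` off the magic points gives `‖z‖⁴ ≤ ‖x‖²(‖z‖² - ‖PᵀΦz‖²)`,
and `‖z‖ ≤ ‖(PᵀΦ)⁻¹‖‖PᵀΦz‖`; since `‖x‖² = ‖z‖² + ‖x - ΦΦᵀx‖²` this yields
`‖x‖ ≤ ‖(PᵀΦ)⁻¹‖‖x - ΦΦᵀx‖`, and `x - ΦΦᵀx = f - ΦΦᵀf` because `𝒫` fixes the range of `Φ`.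
-/

open Matrix
open scoped Matrix.Norms.L2Operator

/-- Multiplication of a real matrix with a Euclidean vector, valued in Euclidean space
(so that `‖·‖` is the Euclidean 2-norm). -/
noncomputable def mulVecE {m n : ℕ} (A : Matrix (Fin m) (Fin n) ℝ)
    (x : EuclideanSpace ℝ (Fin n)) : EuclideanSpace ℝ (Fin m) :=
  Matrix.toEuclideanLin A x

/-- `P : ℝ^{N×M}` is a selection matrix: its `M` columns are distinct standard basis
vectors of `ℝ^N`. -/
def IsSelectionMatrix {N M : ℕ} (P : Matrix (Fin N) (Fin M) ℝ) : Prop :=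
  ∃ g : Fin M → Fin N, Function.Injective g ∧
    ∀ i j, P i j = if i = g j then (1 : ℝ) else 0

open scoped InnerProductSpace

section MulVecE

variable {m n k : ℕ}

lemma mulVecE_sub (A : Matrix (Fin m) (Fin n) ℝ) (x y : EuclideanSpace ℝ (Fin n)) :
    mulVecE A (x - y) = mulVecE A x - mulVecE A y := map_sub _ _ _

lemma mulVecE_mulVecE (A : Matrix (Fin m) (Fin n) ℝ) (B : Matrix (Fin n) (Fin k) ℝ)
    (x : EuclideanSpace ℝ (Fin k)) : mulVecE A (mulVecE B x) = mulVecE (A * B) x := by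
  simp [mulVecE]

lemma mulVecE_one (x : EuclideanSpace ℝ (Fin n)) : mulVecE 1 x = x := by
  simp [mulVecE]

lemma norm_mulVecE_le (A : Matrix (Fin m) (Fin n) ℝ) (x : EuclideanSpace ℝ (Fin n)) :
    ‖mulVecE A x‖ ≤ ‖A‖ * ‖x‖ :=
  ((toEuclideanLin.trans LinearMap.toContinuousLinearMap) A).le_opNorm x

lemma inner_mulVecE_transpose (A : Matrix (Fin m) (Fin n) ℝ)
    (x : EuclideanSpace ℝ (Fin m)) (y : EuclideanSpace ℝ (Fin n)) :
    ⟪mulVecE Aᵀ x, y⟫_ℝ = ⟪x, mulVecE A y⟫_ℝ := by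
  rw [mulVecE, mulVecE, ← conjTranspose_eq_transpose_of_trivial,
    Matrix.toEuclideanLin_conjTranspose_eq_adjoint, LinearMap.adjoint_inner_left]

end MulVecE

section OrthonormalColumns

variable {N M : ℕ} {Φ : Matrix (Fin N) (Fin M) ℝ}

lemma norm_mulVecE_of_transpose_mul_self (hΦ : Φᵀ * Φ = 1) (z : EuclideanSpace ℝ (Fin M)) :
    ‖mulVecE Φ z‖ = ‖z‖ := by
  have h : ‖mulVecE Φ z‖ ^ 2 = ‖z‖ ^ 2 := by
    rw [← real_inner_self_eq_norm_sq, ← real_inner_self_eq_norm_sq,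
      ← inner_mulVecE_transpose, mulVecE_mulVecE, hΦ, mulVecE_one]
  exact (pow_left_inj₀ (norm_nonneg _) (norm_nonneg _) two_ne_zero).mp h

lemma l2_opNorm_le_one_of_transpose_mul_self (hΦ : Φᵀ * Φ = 1) : ‖Φ‖ ≤ 1 :=
  ContinuousLinearMap.opNorm_le_bound _ zero_le_one fun z => by
    rw [one_mul]
    exact (norm_mulVecE_of_transpose_mul_self hΦ z).le

lemma l2_opNorm_transpose_le_one_of_transpose_mul_self (hΦ : Φᵀ * Φ = 1) : ‖Φᵀ‖ ≤ 1 := by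
  rw [← conjTranspose_eq_transpose_of_trivial, l2_opNorm_conjTranspose]
  exact l2_opNorm_le_one_of_transpose_mul_self hΦ

lemma norm_sub_mulVecE_mulVecE_transpose_sq (hΦ : Φᵀ * Φ = 1) (y : EuclideanSpace ℝ (Fin N)) :
    ‖y - mulVecE Φ (mulVecE Φᵀ y)‖ ^ 2 = ‖y‖ ^ 2 - ‖mulVecE Φᵀ y‖ ^ 2 := by
  have horth : ⟪mulVecE Φ (mulVecE Φᵀ y), y - mulVecE Φ (mulVecE Φᵀ y)⟫_ℝ = 0 := by
    rw [real_inner_comm, ← inner_mulVecE_transpose, mulVecE_sub, mulVecE_mulVecE Φᵀ Φ, hΦ,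
      mulVecE_one, sub_self, inner_zero_left]
  have := norm_add_sq_eq_norm_sq_add_norm_sq_real horth
  rw [add_sub_cancel, norm_mulVecE_of_transpose_mul_self hΦ] at this
  linarith

end OrthonormalColumns

lemma le_sq_mul_sub_of_sq_le_mul_sub {a s X c : ℝ} (ha : 0 ≤ a) (haX : a ≤ X) (hc : 1 ≤ c)
    (h₁ : a ^ 2 ≤ X * (a - s)) (h₂ : a ≤ c ^ 2 * s) : X ≤ c ^ 2 * (X - a) := by
  have hc2 : 1 ≤ c ^ 2 := one_le_pow₀ hc
  rcases ha.eq_or_lt with rfl | ha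
  · nlinarith
  · nlinarith

lemma IsSelectionMatrix.transpose_mul_self {N M : ℕ} {P : Matrix (Fin N) (Fin M) ℝ}
    (hP : IsSelectionMatrix P) : Pᵀ * P = 1 := by
  obtain ⟨g, hg, hPg⟩ := hP
  ext j k
  simp only [Matrix.mul_apply, Matrix.transpose_apply, hPg, Matrix.one_apply]
  rw [Finset.sum_eq_single (g j)]
  · simp [hg.eq_iff]
  · intro b _ hb; simp [hb]
  · simp

lemma norm_le_l2_opNorm_inv_mul_norm_mulVecE {M : ℕ} {B : Matrix (Fin M) (Fin M) ℝ}
    (hB : IsUnit B) (z : EuclideanSpace ℝ (Fin M)) : ‖z‖ ≤ ‖B⁻¹‖ * ‖mulVecE B z‖ := by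
  calc ‖z‖ = ‖mulVecE B⁻¹ (mulVecE B z)‖ := by
        rw [mulVecE_mulVecE, nonsing_inv_mul _ ((isUnit_iff_isUnit_det B).mp hB), mulVecE_one]
    _ ≤ ‖B⁻¹‖ * ‖mulVecE B z‖ := norm_mulVecE_le _ _

lemma norm_sub_mulVecE_le_of_residual {m N n : ℕ} {A : Matrix (Fin m) (Fin N) ℝ} {σ : ℝ}
    (hσ : 0 < σ) (hA : ∀ y, σ * ‖y‖ ≤ ‖mulVecE A y‖) {u : EuclideanSpace ℝ (Fin N)}
    {f : EuclideanSpace ℝ (Fin m)} (hu : mulVecE A u = f) (V : Matrix (Fin N) (Fin n) ℝ)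
    (v : EuclideanSpace ℝ (Fin n)) :
    ‖u - mulVecE V v‖ ≤ (1 / σ) * ‖f - mulVecE (A * V) v‖ := by
  rw [← hu, ← mulVecE_mulVecE, ← mulVecE_sub, one_div_mul_eq_div, le_div_iff₀ hσ, mul_comm]
  exact hA _

section Deim

variable {N M : ℕ} {Φ P : Matrix (Fin N) (Fin M) ℝ}

lemma one_le_l2_opNorm_inv_transpose_mul (hM : 0 < M) (hΦ : Φᵀ * Φ = 1) (hP : Pᵀ * P = 1)
    (hinv : IsUnit (Pᵀ * Φ)) : 1 ≤ ‖(Pᵀ * Φ)⁻¹‖ := by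
  have : Nonempty (Fin M) := ⟨⟨0, hM⟩⟩
  have hPΦ : ‖Pᵀ * Φ‖ ≤ 1 :=
    (l2_opNorm_mul _ _).trans (mul_le_one₀ (l2_opNorm_transpose_le_one_of_transpose_mul_self hP)
      (norm_nonneg _) (l2_opNorm_le_one_of_transpose_mul_self hΦ))
  calc (1 : ℝ) = ‖(Pᵀ * Φ)⁻¹ * (Pᵀ * Φ)‖ := by
        rw [nonsing_inv_mul _ ((isUnit_iff_isUnit_det _).mp hinv), norm_one]
    _ ≤ ‖(Pᵀ * Φ)⁻¹‖ * ‖Pᵀ * Φ‖ := l2_opNorm_mul _ _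
    _ ≤ ‖(Pᵀ * Φ)⁻¹‖ := mul_le_of_le_one_right (norm_nonneg _) hPΦ

lemma norm_le_of_mulVecE_transpose_eq_zero (hM : 0 < M) (hΦ : Φᵀ * Φ = 1) (hP : Pᵀ * P = 1)
    (hinv : IsUnit (Pᵀ * Φ)) {x : EuclideanSpace ℝ (Fin N)} (hx : mulVecE Pᵀ x = 0) :
    ‖x‖ ≤ ‖(Pᵀ * Φ)⁻¹‖ * ‖x - mulVecE Φ (mulVecE Φᵀ x)‖ := by
  set z := mulVecE Φᵀ x
  set y := mulVecE Φ z
  have hy : ‖y‖ = ‖z‖ := norm_mulVecE_of_transpose_mul_self hΦ z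
  have hCS : ‖z‖ ^ 2 ≤ ‖x‖ * ‖y - mulVecE P (mulVecE Pᵀ y)‖ := by
    calc ‖z‖ ^ 2 = ⟪x, y - mulVecE P (mulVecE Pᵀ y)⟫_ℝ := by
          rw [inner_sub_right, ← inner_mulVecE_transpose P, hx, inner_zero_left, sub_zero,
            ← inner_mulVecE_transpose, real_inner_self_eq_norm_sq]
      _ ≤ ‖x‖ * ‖y - mulVecE P (mulVecE Pᵀ y)‖ := real_inner_le_norm _ _
  have hoff := norm_sub_mulVecE_mulVecE_transpose_sq hP y
  rw [hy] at hoff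
  have hinvB : ‖z‖ ≤ ‖(Pᵀ * Φ)⁻¹‖ * ‖mulVecE Pᵀ y‖ := by
    rw [mulVecE_mulVecE]
    exact norm_le_l2_opNorm_inv_mul_norm_mulVecE hinv z
  have hpyth := norm_sub_mulVecE_mulVecE_transpose_sq hΦ x
  have hc := one_le_l2_opNorm_inv_transpose_mul hM hΦ hP hinv
  refine le_of_pow_le_pow_left₀ two_ne_zero (by positivity) ?_
  rw [mul_pow, hpyth]
  have hzx : ‖z‖ ^ 2 ≤ ‖x‖ ^ 2 := sub_nonneg.mp (hpyth ▸ sq_nonneg _)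
  refine le_sq_mul_sub_of_sq_le_mul_sub (s := ‖mulVecE Pᵀ y‖ ^ 2) (sq_nonneg _) hzx hc ?_ ?_
  · rw [← hoff, ← mul_pow]
    exact pow_le_pow_left₀ (sq_nonneg _) hCS 2
  · nlinarith [pow_le_pow_left₀ (norm_nonneg _) hinvB 2]

theorem norm_sub_deim_interpolant_le (hM : 0 < M) (hΦ : Φᵀ * Φ = 1) (hP : Pᵀ * P = 1)
    (hinv : IsUnit (Pᵀ * Φ)) (f : EuclideanSpace ℝ (Fin N)) :
    ‖f - mulVecE (Φ * (Pᵀ * Φ)⁻¹ * Pᵀ) f‖ ≤ ‖(Pᵀ * Φ)⁻¹‖ * ‖f - mulVecE (Φ * Φᵀ) f‖ := by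
  have hdet := (isUnit_iff_isUnit_det _).mp hinv
  have hPt : Pᵀ * (Φ * (Pᵀ * Φ)⁻¹ * Pᵀ) = Pᵀ := by
    simp only [← Matrix.mul_assoc, mul_nonsing_inv _ hdet, Matrix.one_mul]
  have hΦt : Φᵀ * (Φ * (Pᵀ * Φ)⁻¹ * Pᵀ) = (Pᵀ * Φ)⁻¹ * Pᵀ := by
    simp only [← Matrix.mul_assoc, hΦ, Matrix.one_mul]
  have hx : mulVecE Pᵀ (f - mulVecE (Φ * (Pᵀ * Φ)⁻¹ * Pᵀ) f) = 0 := by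
    rw [mulVecE_sub, mulVecE_mulVecE, hPt, sub_self]
  have := norm_le_of_mulVecE_transpose_eq_zero hM hΦ hP hinv hx
  simp only [mulVecE_sub, mulVecE_mulVecE, hΦt, ← Matrix.mul_assoc] at this
  convert this using 3
  abel

end Deim

theorem stmt4_general {N₁ N₂ M n₁ n₂ : ℕ}
    (A₁ : Matrix (Fin N₁) (Fin N₁) ℝ) (A₂ : Matrix (Fin N₂) (Fin N₂) ℝ)
    (σ₁ σ₂ : ℝ) (hσ₁ : 0 < σ₁) (hσ₂ : 0 < σ₂)
    (hb₁ : ∀ x : EuclideanSpace ℝ (Fin N₁), σ₁ * ‖x‖ ≤ ‖mulVecE A₁ x‖)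
    (hb₂ : ∀ y : EuclideanSpace ℝ (Fin N₂), σ₂ * ‖y‖ ≤ ‖mulVecE A₂ y‖)
    (hM : 0 < M)
    (Φ P : Matrix (Fin N₂) (Fin M) ℝ)
    (hΦ : Φᵀ * Φ = 1)
    (hP : IsSelectionMatrix P)
    (hinv : IsUnit (Pᵀ * Φ))
    (U : Matrix (Fin M) (Fin N₁) ℝ)
    (u₁ f₁ : EuclideanSpace ℝ (Fin N₁)) (hu₁ : mulVecE A₁ u₁ = f₁)
    (uD : EuclideanSpace ℝ (Fin N₂)) (huD : mulVecE U u₁ = mulVecE Pᵀ uD)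
    (ut₂ f₂ u₂ : EuclideanSpace ℝ (Fin N₂))
    (hut₂ : mulVecE A₂ ut₂ = f₂ - mulVecE A₂ uD)
    (hu₂ : u₂ = ut₂ + uD)
    (V₁ : Matrix (Fin N₁) (Fin n₁) ℝ) (V₂ : Matrix (Fin N₂) (Fin n₂) ℝ)
    (un₁ : EuclideanSpace ℝ (Fin n₁)) (utn₂ : EuclideanSpace ℝ (Fin n₂))
    (r₁ : EuclideanSpace ℝ (Fin N₁)) (hr₁ : r₁ = f₁ - mulVecE (A₁ * V₁) un₁)
    (r₂ : EuclideanSpace ℝ (Fin N₂)) (hr₂ : r₂ = (f₂ - mulVecE A₂ uD) - mulVecE (A₂ * V₂) utn₂)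
    (w₂ : EuclideanSpace ℝ (Fin N₂))
    (hw₂ : w₂ = mulVecE V₂ utn₂ + mulVecE (Φ * (Pᵀ * Φ)⁻¹ * U * V₁) un₁)
    (C : ℝ) (hC : C = ‖Φ * (Pᵀ * Φ)⁻¹ * U‖) :
    ‖u₂ - w₂‖ ≤ (1 / σ₂) * ‖r₂‖ + ‖(Pᵀ * Φ)⁻¹‖ * ‖uD - mulVecE (Φ * Φᵀ) uD‖
      + (C / σ₁) * ‖r₁‖ := by
  set e₁ := u₁ - mulVecE V₁ un₁
  have he₁ : ‖e₁‖ ≤ (1 / σ₁) * ‖r₁‖ := hr₁ ▸ norm_sub_mulVecE_le_of_residual hσ₁ hb₁ hu₁ V₁ un₁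
  have he₂ : ‖ut₂ - mulVecE V₂ utn₂‖ ≤ (1 / σ₂) * ‖r₂‖ :=
    hr₂ ▸ norm_sub_mulVecE_le_of_residual hσ₂ hb₂ hut₂ V₂ utn₂
  have hD := norm_sub_deim_interpolant_le hM hΦ hP.transpose_mul_self hinv uD
  have hsplit : u₂ - w₂ = (ut₂ - mulVecE V₂ utn₂) + (uD - mulVecE (Φ * (Pᵀ * Φ)⁻¹ * Pᵀ) uD)
      + mulVecE (Φ * (Pᵀ * Φ)⁻¹ * U) e₁ := by
    rw [hu₂, hw₂, mulVecE_sub, ← mulVecE_mulVecE _ U, huD, mulVecE_mulVecE, mulVecE_mulVecE]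
    abel
  have hGe₁ : ‖mulVecE (Φ * (Pᵀ * Φ)⁻¹ * U) e₁‖ ≤ (C / σ₁) * ‖r₁‖ :=
    calc ‖mulVecE (Φ * (Pᵀ * Φ)⁻¹ * U) e₁‖ ≤ C * ‖e₁‖ := hC ▸ norm_mulVecE_le _ _
      _ ≤ C * ((1 / σ₁) * ‖r₁‖) := by gcongr; exact hC ▸ norm_nonneg _
      _ = (C / σ₁) * ‖r₁‖ := by ring
  rw [hsplit]
  exact norm_add₃_le.trans (add_le_add (add_le_add he₂ hD) hGe₁)

/-- A posteriori error estimate for the steady one-way coupled ROM: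
`‖u₂ − w₂‖₂ ≤ (1/σ₂)‖r₂‖₂ + ‖(PᵀΦ)⁻¹‖₂ ‖u_D − ΦΦᵀu_D‖₂ + (C/σ₁)‖r₁‖₂`,
where `ũ₂` is written `ut₂` and `ũ_{n₂}` is written `utn₂`. -/
theorem stmt4 {N₁ N₂ M n₁ n₂ : ℕ}
    (A₁ : Matrix (Fin N₁) (Fin N₁) ℝ) (A₂ : Matrix (Fin N₂) (Fin N₂) ℝ)
    (hA₁ : IsUnit A₁) (hA₂ : IsUnit A₂)
    (σ₁ σ₂ : ℝ) (hσ₁ : 0 < σ₁) (hσ₂ : 0 < σ₂)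
    (hb₁ : ∀ x : EuclideanSpace ℝ (Fin N₁), σ₁ * ‖x‖ ≤ ‖mulVecE A₁ x‖)
    (hb₂ : ∀ y : EuclideanSpace ℝ (Fin N₂), σ₂ * ‖y‖ ≤ ‖mulVecE A₂ y‖)
    (hM : 0 < M) (hMN : M < N₂)
    (Φ P : Matrix (Fin N₂) (Fin M) ℝ)
    (hΦ : Φᵀ * Φ = 1)
    (hP : IsSelectionMatrix P)
    (hinv : IsUnit (Pᵀ * Φ))
    (U : Matrix (Fin M) (Fin N₁) ℝ)
    (u₁ f₁ : EuclideanSpace ℝ (Fin N₁)) (hu₁ : mulVecE A₁ u₁ = f₁)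
    (uD : EuclideanSpace ℝ (Fin N₂)) (huD : mulVecE U u₁ = mulVecE Pᵀ uD)
    (ut₂ f₂ u₂ : EuclideanSpace ℝ (Fin N₂))
    (hut₂ : mulVecE A₂ ut₂ = f₂ - mulVecE A₂ uD)
    (hu₂ : u₂ = ut₂ + uD)
    (V₁ : Matrix (Fin N₁) (Fin n₁) ℝ) (V₂ : Matrix (Fin N₂) (Fin n₂) ℝ)
    (un₁ : EuclideanSpace ℝ (Fin n₁)) (utn₂ : EuclideanSpace ℝ (Fin n₂))
    (r₁ : EuclideanSpace ℝ (Fin N₁)) (hr₁ : r₁ = f₁ - mulVecE (A₁ * V₁) un₁)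
    (r₂ : EuclideanSpace ℝ (Fin N₂)) (hr₂ : r₂ = (f₂ - mulVecE A₂ uD) - mulVecE (A₂ * V₂) utn₂)
    (w₂ : EuclideanSpace ℝ (Fin N₂))
    (hw₂ : w₂ = mulVecE V₂ utn₂ + mulVecE (Φ * (Pᵀ * Φ)⁻¹ * U * V₁) un₁)
    (C : ℝ) (hC : C = ‖Φ * (Pᵀ * Φ)⁻¹ * U‖) :
    ‖u₂ - w₂‖ ≤ (1 / σ₂) * ‖r₂‖ + ‖(Pᵀ * Φ)⁻¹‖ * ‖uD - mulVecE (Φ * Φᵀ) uD‖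
      + (C / σ₁) * ‖r₁‖ :=
  stmt4_general A₁ A₂ σ₁ σ₂ hσ₁ hσ₂ hb₁ hb₂ hM Φ P hΦ hP hinv U u₁ f₁ hu₁ uD huD ut₂ f₂ u₂ hut₂ hu₂
    V₁ V₂ un₁ utn₂ r₁ hr₁ r₂ hr₂ w₂ hw₂ C hC
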